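/- If there exists a pseudoline with respect to a planar embedded graph G = (V,E) passing through exactly the vertices of a set S ⊆ V, then the subgraph of G induced by S is a linear forest, i.e., a disjoint union of simple paths. -/

import Mathlib

/-! A pseudoline `c` is proper and injective, hence a closed embedding of `ℝ`. An edge whose ends
both lie on `c` meets `c` in two points, so it lies on `c`, and pulling it back along `c` shows it
is the image of the parameter interval between its ends. As edges pass through no other vertex,
ordering the vertices of `S` along `c`, every vertex has at most one neighbour on each side. This
bounds the degrees by 2, and on a cycle the vertex furthest along `c` would have two neighbours
behind it. -/

open Set

open scoped Classical

noncomputable section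

/-- The plane. -/
abbrev Pt : Type := EuclideanSpace ℝ (Fin 2)

/-- A (topologically) planar embedded graph: vertices are points of the plane,
edges are drawn as simple arcs that pairwise intersect only in common endpoints
and pass through no other vertex. -/
structure EmbeddedGraph (V : Type) where
  pos : V → Pt
  posInj : Function.Injective pos
  G : SimpleGraph V
  arc : ∀ ⦃u v : V⦄, G.Adj u v → Set Pt
  arc_symm : ∀ {u v : V} (h : G.Adj u v), arc h = arc h.symm
  arc_curve : ∀ {u v : V} (h : G.Adj u v), ∃ γ : ℝ → Pt,
    ContinuousOn γ (Icc 0 1) ∧ InjOn γ (Icc 0 1) ∧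
    γ 0 = pos u ∧ γ 1 = pos v ∧ γ '' (Icc 0 1) = arc h
  arc_inter : ∀ {u v x y : V} (h : G.Adj u v) (h' : G.Adj x y),
    (s(u, v) : Sym2 V) ≠ s(x, y) →
      arc h ∩ arc h' ⊆ ({pos u, pos v} : Set Pt) ∩ {pos x, pos y}
  arc_vertex : ∀ {u v : V} (h : G.Adj u v) (w : V), pos w ∈ arc h → w = u ∨ w = v

namespace EmbeddedGraph

variable {V : Type} (E : EmbeddedGraph V)

/-- The closed point set covered by the drawing of the graph. -/
def image : Set Pt := (range E.pos) ∪ ⋃ (u : V) (v : V) (h : E.G.Adj u v), E.arc h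

/-- A pseudoline with respect to an embedded graph: a simple curve going to
infinity on both ends that contains each edge entirely or meets it in at most
one point. -/
def IsPseudoline (c : ℝ → Pt) : Prop :=
  Continuous c ∧ Function.Injective c ∧
    Filter.Tendsto c (Filter.cocompact ℝ) (Filter.cocompact Pt) ∧
    ∀ {u v : V} (h : E.G.Adj u v),
      E.arc h ⊆ range c ∨ (E.arc h ∩ range c).Subsingleton

/-- An arrangement of `k` pairwise crossing pseudolines with respect to `E`. -/
def IsArrangement {k : ℕ} (A : Fin k → ℝ → Pt) : Prop :=
  (∀ i, E.IsPseudoline (A i)) ∧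
    ∀ i j, i ≠ j → ∃ p : Pt, range (A i) ∩ range (A j) = {p}

/-- The open interior of an edge. -/
def arcInterior {u v : V} (h : E.G.Adj u v) : Set Pt :=
  E.arc h \ {E.pos u, E.pos v}

variable {k : ℕ} (A : Fin k → ℝ → Pt)

/-- A vertex lying on some pseudoline. -/
def AlignedVertex (v : V) : Prop := ∃ i, E.pos v ∈ range (A i)

def FreeVertex (v : V) : Prop := ¬ E.AlignedVertex A v

/-- An edge lying entirely on some pseudoline. -/
def EdgeAligned {u v : V} (h : E.G.Adj u v) : Prop := ∃ i, E.arc h ⊆ range (A i)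

/-- The pseudolines crossing the interior of an edge (not containing it). -/
def crossedSet {u v : V} (h : E.G.Adj u v) : Set (Fin k) :=
  {i | (E.arcInterior h ∩ range (A i)).Nonempty ∧ ¬ E.arc h ⊆ range (A i)}

/-- The number of endpoints of an edge anchored on (distinct) pseudolines not
containing the edge. -/
def anchorNum {u v : V} (h : E.G.Adj u v) : ℕ :=
  if ∃ i j, i ≠ j ∧ E.pos u ∈ range (A i) ∧ E.pos v ∈ range (A j) ∧
      ¬ E.arc h ⊆ range (A i) ∧ ¬ E.arc h ⊆ range (A j) then 2
  else if (∃ i, E.pos u ∈ range (A i) ∧ ¬ E.arc h ⊆ range (A i)) ∨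
      (∃ i, E.pos v ∈ range (A i) ∧ ¬ E.arc h ⊆ range (A i)) then 1
  else 0

/-- An edge is admissible for the bound `l` (`none` = this kind of edge is
forbidden, `some m` = at most `m`-crossed). -/
def edgeOk (l : Option ℕ) {u v : V} (h : E.G.Adj u v) : Prop :=
  ∃ m, l = some m ∧ (E.crossedSet A h).ncard ≤ m

/-- Alignment complexity `(l0, l1, l2)`. -/
def HasComplexity (l0 l1 l2 : Option ℕ) : Prop :=
  ∀ {u v : V} (h : E.G.Adj u v),
    E.edgeOk A (if E.anchorNum A h = 0 then l0
      else if E.anchorNum A h = 1 then l1 else l2) h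

/-- A free edge: no endpoint on a pseudoline, no interior crossing, not aligned. -/
def FreeEdge {u v : V} (h : E.G.Adj u v) : Prop :=
  E.FreeVertex A u ∧ E.FreeVertex A v ∧ E.crossedSet A h = ∅ ∧ ¬ E.EdgeAligned A h

/-- Faces of the embedded graph. -/
def faceOf (x : Pt) : Set Pt := connectedComponentIn (E.image)ᶜ x

def IsFace (F : Set Pt) : Prop := ∃ x, x ∉ E.image ∧ F = E.faceOf x

/-- The outer (unbounded) region. -/
def outerRegion : Set Pt := {x | x ∉ E.image ∧ ¬ Bornology.IsBounded (E.faceOf x)}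

def OnOuter (v : V) : Prop := E.pos v ∈ frontier E.outerRegion

def OuterEdge {u v : V} (h : E.G.Adj u v) : Prop := E.arc h ⊆ frontier E.outerRegion

def InteriorEdge {u v : V} (h : E.G.Adj u v) : Prop := ¬ E.OuterEdge h

def IsChord {u v : V} (h : E.G.Adj u v) : Prop :=
  E.InteriorEdge h ∧ E.OnOuter u ∧ E.OnOuter v

/-- A triangulation: biconnected, all bounded faces are triangles, and the outer
face is bounded by a simple cycle. -/
def IsTriangulation : Prop :=
  E.G.Connected ∧ (∀ v : V, (E.G.comap (Subtype.val : {w : V // w ≠ v} → V)).Connected) ∧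
  (∀ F : Set Pt, E.IsFace F → Bornology.IsBounded F →
    ∃ a b c : V, a ≠ b ∧ a ≠ c ∧ b ≠ c ∧ E.G.Adj a b ∧ E.G.Adj b c ∧ E.G.Adj a c ∧
      {v : V | E.pos v ∈ frontier F} = {a, b, c}) ∧
  (∃ (v : V) (w : E.G.Walk v v), w.IsCycle ∧
    frontier E.outerRegion =
      ⋃ (x : V) (y : V) (h : E.G.Adj x y) (_ : s(x, y) ∈ w.edges), E.arc h)

/-- Proper `k`-aligned graph. -/
def Proper : Prop :=
  (∀ {u v : V} (h : E.G.Adj u v), E.EdgeAligned A h → E.crossedSet A h = ∅) ∧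
  (2 ≤ k →
    (∀ {u v : V} (h : E.G.Adj u v), E.OuterEdge h → (E.crossedSet A h).ncard = 1) ∧
    (∀ i, ∃ p q : Pt, p ≠ q ∧ frontier E.outerRegion ∩ range (A i) = {p, q}) ∧
    (∀ i j, i ≠ j → range (A i) ∩ range (A j) ∩ E.outerRegion = ∅))

/-- The set of points strictly inside a triangle of the drawing. -/
def TriInside {a b c : V} (hab : E.G.Adj a b) (hbc : E.G.Adj b c)
    (hac : E.G.Adj a c) (x : Pt) : Prop :=
  x ∉ (E.arc hab ∪ E.arc hbc ∪ E.arc hac) ∧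
    Bornology.IsBounded
      (connectedComponentIn (E.arc hab ∪ E.arc hbc ∪ E.arc hac)ᶜ x)

/-- `E` has a separating triangle. -/
def HasSepTriangle : Prop :=
  ∃ (a b c : V) (hab : E.G.Adj a b) (hbc : E.G.Adj b c) (hac : E.G.Adj a c),
    (∃ v : V, E.TriInside hab hbc hac (E.pos v)) ∧
    (∃ v : V, E.pos v ∉ (E.arc hab ∪ E.arc hbc ∪ E.arc hac) ∧
      ¬ E.TriInside hab hbc hac (E.pos v))

end EmbeddedGraph

/-- A straight line in the plane. -/
def IsLine (l : Set Pt) : Prop :=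
  ∃ p d : Pt, d ≠ 0 ∧ l = {x : Pt | ∃ t : ℝ, x = p + t • d}

/-- Stretchability of a pseudoline arrangement: some homeomorphism of the plane
takes it to a line arrangement. -/
def Stretchable {k : ℕ} (A : Fin k → ℝ → Pt) : Prop :=
  ∃ (L : Fin k → Set Pt) (h : Pt ≃ₜ Pt),
    (∀ i, IsLine (L i)) ∧ ∀ i, h '' range (A i) = L i

namespace EmbeddedGraph

variable {V : Type} (E : EmbeddedGraph V) {k : ℕ} (A : Fin k → ℝ → Pt)

/-- A straight-line aligned drawing `(Γ, L)` of the aligned graph `(E, A)`: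
a homeomorphism of the plane takes vertices to `Γ`, every arc to the
corresponding straight segment, and every pseudoline to the corresponding line. -/
def IsAlignedDrawing (Γ : V → Pt) (L : Fin k → Set Pt) : Prop :=
  (∀ i, IsLine (L i)) ∧
  ∃ h : Pt ≃ₜ Pt, (∀ v : V, h (E.pos v) = Γ v) ∧
    (∀ {u v : V} (huv : E.G.Adj u v),
      h '' E.arc huv = segment ℝ (Γ u) (Γ v)) ∧
    ∀ i, h '' range (A i) = L i

end EmbeddedGraph

/-- The union of an arrangement of curves. -/
def arrUnion {k : ℕ} (A : Fin k → ℝ → Pt) : Set Pt := ⋃ i, range (A i)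

/-- A cell of the arrangement. -/
def IsCell {k : ℕ} (A : Fin k → ℝ → Pt) (C : Set Pt) : Prop :=
  ∃ x, x ∉ arrUnion A ∧ C = connectedComponentIn (arrUnion A)ᶜ x

/-- A pseudosegment of the pseudoline `A i`: a connected component of `A i`
minus the other pseudolines. -/
def IsPseudosegment {k : ℕ} (A : Fin k → ℝ → Pt) (i : Fin k) (S : Set Pt) : Prop :=
  ∃ x, x ∈ range (A i) \ ⋃ j ∈ ({i}ᶜ : Set (Fin k)), range (A j) ∧
    S = connectedComponentIn (range (A i) \ ⋃ j ∈ ({i}ᶜ : Set (Fin k)), range (A j)) x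

/-- Biconnectivity of an abstract graph. -/
def Biconnected {V : Type} (G : SimpleGraph V) : Prop :=
  G.Connected ∧ ∀ v : V, (G.comap (Subtype.val : {w : V // w ≠ v} → V)).Connected

end

open Function Topology

theorem ContinuousOn.image_Icc_eq_uIcc_of_injOn {α δ : Type*} [ConditionallyCompleteLinearOrder α]
    [TopologicalSpace α] [OrderTopology α] [DenselyOrdered α] [LinearOrder δ] [TopologicalSpace δ]
    [OrderClosedTopology δ] {a b : α} {f : α → δ} (hab : a ≤ b) (hf : ContinuousOn f (Icc a b))
    (hinj : InjOn f (Icc a b)) : f '' Icc a b = uIcc (f a) (f b) := by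
  have ha : a ∈ Icc a b := left_mem_Icc.mpr hab
  have hb : b ∈ Icc a b := right_mem_Icc.mpr hab
  rcases hf.strictMonoOn_of_injOn_Icc' hab hinj with hmono | hanti
  · rw [hf.image_Icc_of_monotoneOn hab hmono.monotoneOn,
      uIcc_of_le (hmono.monotoneOn ha hb hab)]
  · rw [hf.image_Icc_of_antitoneOn hab hanti.antitoneOn,
      uIcc_of_ge (hanti.antitoneOn ha hb hab)]

theorem Topology.IsEmbedding.image_Icc_eq_image_uIcc {X : Type*} [TopologicalSpace X]
    {c : ℝ → X} (hc : IsEmbedding c) {γ : ℝ → X} {a b : ℝ} (hab : a ≤ b)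
    (hγc : ContinuousOn γ (Icc a b)) (hγi : InjOn γ (Icc a b)) (hγ : γ '' Icc a b ⊆ range c) :
    γ '' Icc a b = c '' uIcc (invFun c (γ a)) (invFun c (γ b)) := by
  set g := invFun c ∘ γ
  have hcg : EqOn (c ∘ g) γ (Icc a b) := fun x hx => invFun_eq (hγ (mem_image_of_mem γ hx))
  have hgc : ContinuousOn g (Icc a b) := hc.isInducing.continuousOn_iff.mpr (hγc.congr hcg)
  have hgi : InjOn g (Icc a b) := fun x hx y hy hxy =>
    hγi hx hy (by rw [← hcg hx, ← hcg hy, comp_apply, hxy]; rfl)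
  rw [← hcg.image_eq, image_comp, hgc.image_Icc_eq_uIcc_of_injOn hab hgi]
  rfl

theorem mem_uIcc_or_mem_uIcc_of_le_iff_le {α : Type*} [LinearOrder α] {x a b : α}
    (h : a ≤ x ↔ b ≤ x) :
    a ∈ uIcc x b ∨ b ∈ uIcc x a := by
  simp only [mem_uIcc]
  grind

namespace SimpleGraph

variable {W α : Type*} [LinearOrder α]

def AtMostOneNeighborEachSide (G : SimpleGraph W) (t : W → α) : Prop :=
  ∀ ⦃v w₁ w₂⦄, G.Adj v w₁ → G.Adj v w₂ → (t w₁ ≤ t v ↔ t w₂ ≤ t v) → w₁ = w₂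

variable {G : SimpleGraph W} {t : W → α}

theorem AtMostOneNeighborEachSide.ncard_neighborSet_le_two
    (ht : G.AtMostOneNeighborEachSide t) (v : W) : (G.neighborSet v).ncard ≤ 2 := by
  have hinj : InjOn (fun w => decide (t w ≤ t v)) (G.neighborSet v) :=
    fun w₁ h₁ w₂ h₂ h => ht h₁ h₂ (by simpa using h)
  calc (G.neighborSet v).ncard ≤ (univ : Set Bool).ncard :=
        ncard_le_ncard_of_injOn _ (fun _ _ => mem_univ _) hinj finite_univ
    _ = 2 := by simp

theorem AtMostOneNeighborEachSide.isAcyclic (ht : G.AtMostOneNeighborEachSide t) :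
    G.IsAcyclic := by
  intro u p hp
  obtain ⟨m, hm, hmax⟩ := p.support.toFinset.exists_max_image t
    ⟨u, List.mem_toFinset.mpr p.start_mem_support⟩
  obtain ⟨a, b, hab, hnbr⟩ :=
    ncard_eq_two.mp (hp.ncard_neighborSet_toSubgraph_eq_two (List.mem_toFinset.mp hm))
  have hbelow : ∀ w ∈ p.toSubgraph.neighborSet m, G.Adj m w ∧ t w ≤ t m := fun w hw =>
    ⟨p.toSubgraph.adj_sub hw,
      hmax w (List.mem_toFinset.mpr (p.mem_verts_toSubgraph.mp (p.toSubgraph.edge_vert hw.symm)))⟩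
  obtain ⟨hma, hta⟩ := hbelow a (by rw [hnbr]; exact mem_insert a {b})
  obtain ⟨hmb, htb⟩ := hbelow b (by rw [hnbr]; exact mem_insert_of_mem a rfl)
  exact hab (ht hma hmb (iff_of_true hta htb))

end SimpleGraph

namespace EmbeddedGraph

variable {V : Type} {E : EmbeddedGraph V} {c : ℝ → Pt}

theorem IsPseudoline.isEmbedding (hc : E.IsPseudoline c) : IsEmbedding c :=
  (IsClosedEmbedding.of_continuous_injective_isClosedMap hc.1 hc.2.1
    (isProperMap_iff_tendsto_cocompact.mpr ⟨hc.1, hc.2.2.1⟩).isClosedMap).isEmbedding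

theorem IsPseudoline.arc_eq_image_uIcc (hc : E.IsPseudoline c) {u v : V} (huv : E.G.Adj u v)
    (hu : E.pos u ∈ range c) (hv : E.pos v ∈ range c) :
    E.arc huv = c '' uIcc (invFun c (E.pos u)) (invFun c (E.pos v)) := by
  obtain ⟨γ, hγc, hγi, hγ0, hγ1, hγ⟩ := E.arc_curve huv
  have hsub : E.arc huv ⊆ range c := by
    refine (hc.2.2.2 huv).resolve_right fun hsing => huv.ne (E.posInj ?_)
    refine hsing ⟨?_, hu⟩ ⟨?_, hv⟩
    · exact hγ ▸ hγ0 ▸ mem_image_of_mem γ (left_mem_Icc.mpr zero_le_one)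
    · exact hγ ▸ hγ1 ▸ mem_image_of_mem γ (right_mem_Icc.mpr zero_le_one)
  rw [← hγ0, ← hγ1, ← hγ]
  exact hc.isEmbedding.image_Icc_eq_image_uIcc zero_le_one hγc hγi (hγ ▸ hsub)

theorem IsPseudoline.atMostOneNeighborEachSide (hc : E.IsPseudoline c) {S : Set V}
    (hS : ∀ v ∈ S, E.pos v ∈ range c) :
    (E.G.comap (Subtype.val : S → V)).AtMostOneNeighborEachSide
      fun v => invFun c (E.pos v) := by
  have hbetween : ∀ {u v w : S}, E.G.Adj u v →
      invFun c (E.pos w) ∈ uIcc (invFun c (E.pos u)) (invFun c (E.pos v)) → w = u ∨ w = v := by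
    intro u v w huv hw
    have hpos : E.pos w ∈ E.arc huv := by
      rw [hc.arc_eq_image_uIcc huv (hS u u.2) (hS v v.2), ← invFun_eq (hS w w.2)]
      exact mem_image_of_mem c hw
    simpa only [Subtype.ext_iff] using E.arc_vertex huv w hpos
  intro v w₁ w₂ h₁ h₂ hside
  rcases mem_uIcc_or_mem_uIcc_of_le_iff_le hside with hw | hw
  · exact (hbetween h₂ hw).resolve_left fun h => h₁.ne (h ▸ rfl)
  · exact ((hbetween h₁ hw).resolve_left fun h => h₂.ne (h ▸ rfl)).symm

end EmbeddedGraph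

/-- If a pseudoline with respect to `E` passes through exactly
the vertices of `S`, then the subgraph induced by `S` is a linear forest:
acyclic with all degrees at most 2. -/
theorem induced_linear_forest {V : Type} (E : EmbeddedGraph V) (S : Set V)
    (h : ∃ c : ℝ → Pt, E.IsPseudoline c ∧
      ∀ v : V, E.pos v ∈ range c ↔ v ∈ S) :
    (E.G.comap (Subtype.val : S → V)).IsAcyclic ∧
    ∀ v : S, ((E.G.comap (Subtype.val : S → V)).neighborSet v).ncard ≤ 2 := by
  obtain ⟨c, hc : E.IsPseudoline c, hS⟩ := h
  have hsides := hc.atMostOneNeighborEachSide fun v hv => (hS v).mpr hv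
  exact ⟨hsides.isAcyclic, hsides.ncard_neighborSet_le_two⟩
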